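/- Let S be a commutative (additive) semigroup admitting an invariant mean, let Z be a real Banach space, X = Z* its dual, and let F be a set-valued map assigning to each s ∈ S a nonempty, convex, norm-bounded, weak*-closed subset F(s) ⊆ X. Then F admits an additive selection (a map g : S → X with g(s+t) = g(s) + g(t) for all s, t ∈ S and g(s) ∈ F(s) for all s ∈ S) if and only if there exists a function f : S → X such that f(s+t) − f(t) ∈ F(s) for all s, t ∈ S. -/

import Mathlib

/-!
Given `f`, the differences `δ s : t ↦ f (s + t) - f t` form, for each `s`, a bounded family in
`F s`. Averaging it with the invariant mean in the weak* sense, `g s z := m (t ↦ δ s t z)`, gives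
a functional; the cocycle identity `δ (s + u) t = δ s (t + u) + δ u t` and invariance of `m`
make `g` additive, and since a mean of values in a weak*-closed convex set stays in it
(Hahn–Banach, the weak*-continuous functionals being evaluations), `g s ∈ F s`.
-/

noncomputable section
open BoundedContinuousFunction NormedSpace

/-- For a bounded function `f` on a (discrete) additive semigroup `S`, the translate
`t ↦ f (t + s)`. -/
def addTranslate {S : Type*} [AddCommSemigroup S] [TopologicalSpace S] [DiscreteTopology S]
    {E : Type*} [PseudoMetricSpace E] (f : S →ᵇ E) (s : S) : S →ᵇ E :=
  f.compContinuous ⟨fun t => t + s, continuous_of_discreteTopology⟩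

/-- An invariant mean on a commutative additive semigroup `S`: a positive, norm-one
continuous linear functional `m` on the bounded real functions on `S` with `m 𝟙 = 1` and
`m (t ↦ f (t + s)) = m f` for all `f` and `s`. -/
def IsAddInvariantMean {S : Type*} [AddCommSemigroup S] [TopologicalSpace S]
    [DiscreteTopology S] (m : (S →ᵇ ℝ) →L[ℝ] ℝ) : Prop :=
  (∀ f : S →ᵇ ℝ, (∀ t, 0 ≤ f t) → 0 ≤ m f) ∧ ‖m‖ = 1 ∧
  m (const S (1 : ℝ)) = 1 ∧
  ∀ (f : S →ᵇ ℝ) (s : S), m (addTranslate f s) = m f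

namespace StrongDual

variable {Z : Type*} [NormedAddCommGroup Z] [NormedSpace ℝ Z]

theorem mem_of_forall_apply_le {K : Set (StrongDual ℝ Z)} (hconv : Convex ℝ K)
    (hclosed : IsClosed (toWeakDual '' K)) {x : StrongDual ℝ Z}
    (hx : ∀ (z : Z) (u : ℝ), (∀ y ∈ K, y z ≤ u) → x z ≤ u) : x ∈ K := by
  have : LocallyConvexSpace ℝ (WeakDual ℝ Z) := WeakBilin.locallyConvexSpace
  by_contra hxK
  have hx' : toWeakDual x ∉ toWeakDual '' K := by
    rwa [toWeakDual.injective.mem_set_image]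
  obtain ⟨φ, u, hK, hux⟩ := geometric_hahn_banach_closed_point
    (hconv.linear_image toWeakDual.toLinearMap) hclosed hx'
  -- weak representation theorem: `φ` is evaluation at some `z : Z`
  obtain ⟨z, rfl⟩ := LinearMap.dualEmbedding_surjective (topDualPairing ℝ Z) φ
  exact hux.not_ge (hx z u fun y hy => (hK _ ⟨y, hy, rfl⟩).le)

end StrongDual

namespace BoundedContinuousFunction

variable {S : Type*} [TopologicalSpace S] {𝕜 : Type*} [NontriviallyNormedField 𝕜]
  {E : Type*} [NormedAddCommGroup E] [NormedSpace 𝕜 E]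
  {F : Type*} [NormedAddCommGroup F] [NormedSpace 𝕜 F]

def flipCLM (φ : S →ᵇ (E →L[𝕜] F)) : E →L[𝕜] (S →ᵇ F) :=
  LinearMap.mkContinuous
    { toFun := fun z => (ContinuousLinearMap.apply 𝕜 F z).compLeftContinuousBounded S φ
      map_add' := fun z w => by ext; simp
      map_smul' := fun c z => by ext; simp }
    ‖φ‖ fun z => (norm_le (by positivity)).2 fun t =>
      (φ t).le_of_opNorm_le (φ.norm_coe_le_norm t) z

@[simp]
theorem flipCLM_apply (φ : S →ᵇ (E →L[𝕜] F)) (z : E) (t : S) : flipCLM φ z t = φ t z := rfl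

theorem flipCLM_add (φ ψ : S →ᵇ (E →L[𝕜] F)) : flipCLM (φ + ψ) = flipCLM φ + flipCLM ψ := by
  ext; simp

end BoundedContinuousFunction

section WeakStarMean

variable {S : Type*} [TopologicalSpace S] {Z : Type*} [NormedAddCommGroup Z] [NormedSpace ℝ Z]

def weakStarMean (m : (S →ᵇ ℝ) →L[ℝ] ℝ) (φ : S →ᵇ StrongDual ℝ Z) : StrongDual ℝ Z :=
  m.comp (flipCLM φ)

theorem weakStarMean_add (m : (S →ᵇ ℝ) →L[ℝ] ℝ) (φ ψ : S →ᵇ StrongDual ℝ Z) :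
    weakStarMean m (φ + ψ) = weakStarMean m φ + weakStarMean m ψ := by
  simp only [weakStarMean, flipCLM_add, ContinuousLinearMap.comp_add]

variable [AddCommSemigroup S] [DiscreteTopology S] {m : (S →ᵇ ℝ) →L[ℝ] ℝ}

theorem IsAddInvariantMean.le_of_forall_le (hm : IsAddInvariantMean m) {h : S →ᵇ ℝ} {u : ℝ}
    (hu : ∀ t, h t ≤ u) : m h ≤ u := by
  obtain ⟨hpos, -, hone, -⟩ := hm
  have := hpos (u • const S 1 - h) fun t => by simpa using hu t
  rw [map_sub, map_smul, hone, smul_eq_mul, mul_one] at this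
  linarith

theorem IsAddInvariantMean.weakStarMean_addTranslate (hm : IsAddInvariantMean m)
    (φ : S →ᵇ StrongDual ℝ Z) (s : S) : weakStarMean m (addTranslate φ s) = weakStarMean m φ := by
  obtain ⟨-, -, -, hinv⟩ := hm
  ext z
  exact hinv (flipCLM φ z) s

theorem IsAddInvariantMean.weakStarMean_mem (hm : IsAddInvariantMean m)
    {K : Set (StrongDual ℝ Z)} (hconv : Convex ℝ K)
    (hclosed : IsClosed (StrongDual.toWeakDual '' K))
    {φ : S →ᵇ StrongDual ℝ Z} (hφ : ∀ t, φ t ∈ K) : weakStarMean m φ ∈ K :=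
  StrongDual.mem_of_forall_apply_le hconv hclosed fun _ _ hu =>
    hm.le_of_forall_le fun t => hu _ (hφ t)

end WeakStarMean

theorem additive_selection_iff_general
    {S : Type*} [AddCommSemigroup S] [TopologicalSpace S] [DiscreteTopology S]
    {Z : Type*} [NormedAddCommGroup Z] [NormedSpace ℝ Z]
    (m : (S →ᵇ ℝ) →L[ℝ] ℝ) (hm : IsAddInvariantMean m)
    (F : S → Set (StrongDual ℝ Z))
    (hconv : ∀ s, Convex ℝ (F s))
    (hbdd : ∀ s, Bornology.IsBounded (F s))
    (hclosed : ∀ s, IsClosed (StrongDual.toWeakDual '' F s)) :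
    (∃ g : S → StrongDual ℝ Z,
        (∀ s t : S, g (s + t) = g s + g t) ∧ ∀ s : S, g s ∈ F s) ↔
    (∃ f : S → StrongDual ℝ Z, ∀ s t : S, f (s + t) - f t ∈ F s) := by
  refine ⟨fun ⟨g, hadd, hsel⟩ => ⟨g, fun s t => by simpa [hadd] using hsel s⟩, fun ⟨f, hf⟩ => ?_⟩
  choose C hC using fun s => isBounded_iff_forall_norm_le.mp (hbdd s)
  let δ : S → S →ᵇ StrongDual ℝ Z := fun s =>
    ofNormedAddCommGroupDiscrete (fun t => f (s + t) - f t) (C s) fun t => hC s _ (hf s t)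
  have hδ : ∀ s u, δ (s + u) = addTranslate (δ s) u + δ u := fun s u => by
    ext1 t
    simp [δ, addTranslate, add_assoc, add_comm u t]
  refine ⟨fun s => weakStarMean m (δ s), fun s u => ?_,
    fun s => hm.weakStarMean_mem (hconv s) (hclosed s) (hf s)⟩
  simp only [hδ, weakStarMean_add, hm.weakStarMean_addTranslate]

/-- (Ger-type selection theorem) Let `S` be a commutative semigroup admitting an invariant
mean and `X = Z*` a dual Banach space. A set-valued map `F` on `S` whose values are
nonempty, convex, bounded and weak*-closed subsets of `X` admits an additive selection if
and only if there is a map `f : S → X` with `f (s + t) - f t ∈ F s` for all `s, t`. -/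
theorem additive_selection_iff
    {S : Type*} [AddCommSemigroup S] [TopologicalSpace S] [DiscreteTopology S]
    {Z : Type*} [NormedAddCommGroup Z] [NormedSpace ℝ Z]
    (m : (S →ᵇ ℝ) →L[ℝ] ℝ) (hm : IsAddInvariantMean m)
    (F : S → Set (StrongDual ℝ Z))
    (hne : ∀ s, (F s).Nonempty)
    (hconv : ∀ s, Convex ℝ (F s))
    (hbdd : ∀ s, Bornology.IsBounded (F s))
    (hclosed : ∀ s, IsClosed (StrongDual.toWeakDual '' F s)) :
    (∃ g : S → StrongDual ℝ Z,
        (∀ s t : S, g (s + t) = g s + g t) ∧ ∀ s : S, g s ∈ F s) ↔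
    (∃ f : S → StrongDual ℝ Z, ∀ s t : S, f (s + t) - f t ∈ F s) :=
  additive_selection_iff_general m hm F hconv hbdd hclosed
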